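/- arXiv:1304.2998 — 2 statements merged into one kernel-verified Lean document; each statement's English description precedes it below -/
import Mathlib

section
/- Let a be a real number with 0 < a < 1. Then ∫₀^π sin(3ν) · log((1 − a·sin(ν))/(1 + a·sin(ν))) dν = (2π/(3a³)) · (4 − 3a² − (a⁴ − 5a² + 4)/√(1 − a²)). -/
/-!
Integrate by parts against `-cos (3ν) / 3`: the boundary terms vanish because the logarithm
is zero at `0` and `π`, and its derivative is `-2a cos ν / (1 - a² sin² ν)`. Since
`cos 3ν cos ν = 1 - 5 sin² ν + 4 sin⁴ ν`, division by `1 - a² sin² ν` leaves a polynomial in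
`sin² ν` plus a multiple of `1 / (1 - a² sin² ν)`, whose integral over `[0, π]` is
`π / √(1 - a²)`.
-/

open Real intervalIntegral

/-- A continuous branch of `arctan (c * tan ν)` on all of `ℝ`: by the subtraction formula
for `arctan` it equals `ν + arctan (c * tan ν) - arctan (tan ν)`, hence agrees with
`arctan (c * tan ν)` on `(-π/2, π/2)`. -/
noncomputable def arctanMulTan (c ν : ℝ) : ℝ :=
  ν + arctan ((c - 1) * (sin ν * cos ν) / (cos ν ^ 2 + c * sin ν ^ 2))

lemma cos_sq_add_mul_sin_sq_pos {c : ℝ} (hc : 0 < c) (ν : ℝ) :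
    0 < cos ν ^ 2 + c * sin ν ^ 2 := by
  nlinarith [sin_sq_add_cos_sq ν, sq_nonneg (cos ν), mul_nonneg hc.le (sq_nonneg (sin ν))]

lemma hasDerivAt_arctanMulTan {c : ℝ} (hc : 0 < c) (ν : ℝ) :
    HasDerivAt (arctanMulTan c) (c / (cos ν ^ 2 + c ^ 2 * sin ν ^ 2)) ν := by
  have hden := cos_sq_add_mul_sin_sq_pos hc ν
  have hden' := cos_sq_add_mul_sin_sq_pos (pow_pos hc 2) ν
  have hnum : HasDerivAt (fun ν => (c - 1) * (sin ν * cos ν))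
      ((c - 1) * (cos ν * cos ν + sin ν * -sin ν)) ν :=
    ((hasDerivAt_sin ν).mul (hasDerivAt_cos ν)).const_mul _
  have hdenom : HasDerivAt (fun ν => cos ν ^ 2 + c * sin ν ^ 2)
      (2 * cos ν ^ 1 * -sin ν + c * (2 * sin ν ^ 1 * cos ν)) ν :=
    ((hasDerivAt_cos ν).pow 2).add (((hasDerivAt_sin ν).pow 2).const_mul c)
  refine ((hasDerivAt_id' ν).add (hnum.div hdenom hden.ne').arctan).congr_deriv ?_
  have hpy := sin_sq_add_cos_sq ν
  simp only [Pi.div_apply]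
  field_simp
  linear_combination c * (cos ν ^ 2 + c ^ 2 * sin ν ^ 2) * (sin ν ^ 2 + cos ν ^ 2) * hpy

lemma integral_inv_cos_sq_add_sq_mul_sin_sq {c : ℝ} (hc : 0 < c) :
    ∫ ν in 0..π, (cos ν ^ 2 + c ^ 2 * sin ν ^ 2)⁻¹ = π / c := by
  have hden ν := (cos_sq_add_mul_sin_sq_pos (pow_pos hc 2) ν).ne'
  have hcont : Continuous fun ν => (cos ν ^ 2 + c ^ 2 * sin ν ^ 2)⁻¹ := by
    fun_prop (disch := exact hden _)
  have hFTC : ∫ ν in 0..π, c / (cos ν ^ 2 + c ^ 2 * sin ν ^ 2) = π := by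
    rw [integral_eq_sub_of_hasDerivAt (fun ν _ => hasDerivAt_arctanMulTan hc ν)
      ((continuous_const.mul hcont).intervalIntegrable _ _)]
    simp [arctanMulTan]
  simp only [div_eq_mul_inv, integral_const_mul] at hFTC
  rw [eq_div_iff hc.ne', mul_comm, hFTC]

lemma integral_inv_one_sub_mul_sin_sq {b : ℝ} (hb : b < 1) :
    ∫ ν in 0..π, (1 - b * sin ν ^ 2)⁻¹ = π / √(1 - b) := by
  have hc2 : √(1 - b) ^ 2 = 1 - b := sq_sqrt (by linarith)
  rw [← integral_inv_cos_sq_add_sq_mul_sin_sq (sqrt_pos.2 (by linarith))]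
  congr 1 with ν
  rw [hc2, cos_sq']
  ring

lemma abs_mul_sin_lt_one {a : ℝ} (ha : |a| < 1) (ν : ℝ) : |a * sin ν| < 1 := by
  rw [abs_mul]
  exact (mul_le_of_le_one_right (abs_nonneg a) (abs_sin_le_one ν)).trans_lt ha

lemma one_sub_sq_mul_sin_sq_pos {a : ℝ} (ha : |a| < 1) (ν : ℝ) :
    0 < 1 - a ^ 2 * sin ν ^ 2 := by
  have := abs_mul_sin_lt_one ha ν
  rw [← mul_pow, sub_pos, ← sq_abs]
  nlinarith [abs_nonneg (a * sin ν)]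

lemma hasDerivAt_log_one_sub_mul_sin_div {a : ℝ} (ha : |a| < 1) (ν : ℝ) :
    HasDerivAt (fun ν => log ((1 - a * sin ν) / (1 + a * sin ν)))
      (-(2 * a * cos ν) / (1 - a ^ 2 * sin ν ^ 2)) ν := by
  obtain ⟨hlt, hgt⟩ := abs_lt.mp (abs_mul_sin_lt_one ha ν)
  have hsin := (hasDerivAt_sin ν).const_mul a
  refine (((hsin.const_sub 1).div (hsin.const_add 1) (by linarith)).log
    (div_pos (by linarith) (by linarith)).ne').congr_deriv ?_
  have h₁ : 1 - a * sin ν ≠ 0 := by linarith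
  have h₂ : 1 + a * sin ν ≠ 0 := by linarith
  rw [show 1 - a ^ 2 * sin ν ^ 2 = (1 - a * sin ν) * (1 + a * sin ν) by ring, Pi.div_apply]
  field_simp
  ring

lemma cos_three_mul_mul_cos_div_eq {a : ℝ} (ha0 : a ≠ 0) (ha : |a| < 1) (ν : ℝ) :
    cos (3 * ν) * cos ν / (1 - a ^ 2 * sin ν ^ 2) =
      -4 / a ^ 2 * sin ν ^ 2 + (5 * a ^ 2 - 4) / a ^ 4
        + (a ^ 4 - 5 * a ^ 2 + 4) / a ^ 4 * (1 - a ^ 2 * sin ν ^ 2)⁻¹ := by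
  have hden := (one_sub_sq_mul_sin_sq_pos ha ν).ne'
  have hcos : cos (3 * ν) * cos ν = 1 - 5 * sin ν ^ 2 + 4 * sin ν ^ 4 := by
    rw [cos_three_mul]
    linear_combination (4 * cos ν ^ 2 - 4 * sin ν ^ 2 + 1) * cos_sq' ν
  rw [hcos, div_eq_iff hden, add_mul _ (_ * _⁻¹), mul_assoc _ _⁻¹, inv_mul_cancel₀ hden]
  field_simp
  ring

lemma integral_cos_three_mul_mul_cos_div {a : ℝ} (ha0 : a ≠ 0) (ha : |a| < 1) :
    ∫ ν in 0..π, cos (3 * ν) * cos ν / (1 - a ^ 2 * sin ν ^ 2) =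
      π * (-2 / a ^ 2 + (5 * a ^ 2 - 4) / a ^ 4
        + (a ^ 4 - 5 * a ^ 2 + 4) / (a ^ 4 * √(1 - a ^ 2))) := by
  have ha2 : a ^ 2 < 1 := by simpa using one_sub_sq_mul_sin_sq_pos ha (π / 2)
  have hinv : Continuous fun ν => (1 - a ^ 2 * sin ν ^ 2)⁻¹ := by
    fun_prop (disch := exact fun ν => (one_sub_sq_mul_sin_sq_pos ha ν).ne')
  simp only [cos_three_mul_mul_cos_div_eq ha0 ha]
  rw [integral_add (Continuous.intervalIntegrable (by fun_prop) _ _)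
      ((hinv.intervalIntegrable _ _).const_mul _),
    integral_add (Continuous.intervalIntegrable (by fun_prop) _ _) intervalIntegrable_const,
    integral_const_mul, integral_const_mul, integral_sin_sq, integral_const,
    integral_inv_one_sub_mul_sin_sq ha2]
  simp only [sin_zero, cos_zero, sin_pi, cos_pi, mul_one, mul_neg, neg_zero, sub_self, zero_add,
    sub_zero, smul_eq_mul]
  field_simp
  ring

theorem integral_sin3_log_I2 (a : ℝ) (h0 : 0 < a) (h1 : a < 1) :
    ∫ ν in (0 : ℝ)..π,
        Real.sin (3 * ν) * Real.log ((1 - a * Real.sin ν) / (1 + a * Real.sin ν))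
      = (2 * π / (3 * a ^ 3)) *
          (4 - 3 * a ^ 2 - (a ^ 4 - 5 * a ^ 2 + 4) / Real.sqrt (1 - a ^ 2)) := by
  have ha : |a| < 1 := by rwa [abs_of_pos h0]
  have hlog ν := hasDerivAt_log_one_sub_mul_sin_div ha ν
  have hden ν := (one_sub_sq_mul_sin_sq_pos ha ν).ne'
  have hcos ν : HasDerivAt (fun ν => -cos (3 * ν) / 3) (sin (3 * ν)) ν := by
    refine (((hasDerivAt_id' ν).const_mul 3).cos.neg.div_const 3).congr_deriv ?_
    ring
  have hparts := integral_mul_deriv_eq_deriv_mul (a := 0) (b := π) (fun ν _ => hlog ν)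
    (fun ν _ => hcos ν) (Continuous.intervalIntegrable (by fun_prop (disch := exact hden)) _ _)
    (Continuous.intervalIntegrable (by fun_prop) _ _)
  have hintegrand x : -(2 * a * cos x) / (1 - a ^ 2 * sin x ^ 2) * (-cos (3 * x) / 3) =
      2 * a / 3 * (cos (3 * x) * cos x / (1 - a ^ 2 * sin x ^ 2)) := by ring
  simp only [mul_comm (sin _), hparts, hintegrand, integral_const_mul,
    integral_cos_three_mul_mul_cos_div h0.ne' ha, sin_pi, sin_zero, mul_zero, add_zero,
    sub_zero, div_one, log_one, zero_mul]
  have hsqrt : 0 < √(1 - a ^ 2) := sqrt_pos.2 (by nlinarith)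
  field_simp
  ring
end

section
/- Let b be a nonzero real number. Then ∫₀^{π/2} cos(3ν) · arctan(b·cos(ν)) dν = (π/(6b³)) · (3b² + 4 − (b⁴ + 5b² + 4)/√(b² + 1)). -/
/-!
Integrating by parts against `sin (3ν) / 3` turns the integrand into
`(b / 3) sin (3ν) sin ν / (1 + b² cos² ν)`, the boundary terms vanishing. Since
`sin (3ν) sin ν = (4 cos² ν - 1)(1 - cos² ν)`, dividing by `1 + b² cos² ν` leaves a polynomial in
`cos² ν` plus a multiple of `1 / (1 + b² cos² ν)`, and the latter integrates over `[0, π/2]` to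
`π / (2 √(1 + b²))` by the classical `∫₀^{π/2} dν / (a² cos² ν + b² sin² ν) = π / (2ab)`.
-/

open Real intervalIntegral

theorem mul_cos_sq_add_mul_sin_sq_pos {a b : ℝ} (ha : 0 < a) (hb : 0 < b) (ν : ℝ) :
    0 < a * cos ν ^ 2 + b * sin ν ^ 2 := by
  rcases eq_or_ne (cos ν) 0 with h | h
  · simp [h, sin_sq, hb]
  · positivity

/-- A continuous branch, on all of `ℝ`, of `arctan (b / a * tan ν)`: by the subtraction formula
`tan (ν - arctan (b / a * tan ν)) = (a - b) sin ν cos ν / (a cos² ν + b sin² ν)`. -/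
theorem hasDerivAt_sub_arctan_sin_mul_cos_div {a b : ℝ} (ha : 0 < a) (hb : 0 < b) (ν : ℝ) :
    HasDerivAt (fun ν => ν - arctan ((a - b) * (sin ν * cos ν) / (a * cos ν ^ 2 + b * sin ν ^ 2)))
      (a * b / (a ^ 2 * cos ν ^ 2 + b ^ 2 * sin ν ^ 2)) ν := by
  have hden := mul_cos_sq_add_mul_sin_sq_pos ha hb ν
  have hden_sq := mul_cos_sq_add_mul_sin_sq_pos (pow_pos ha 2) (pow_pos hb 2) ν
  have hnum := ((hasDerivAt_sin ν).mul (hasDerivAt_cos ν)).const_mul (a - b)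
  have hden' := (((hasDerivAt_cos ν).pow 2).const_mul a).add (((hasDerivAt_sin ν).pow 2).const_mul b)
  refine ((hasDerivAt_id ν).sub ((hnum.div hden' hden.ne').arctan)).congr_deriv ?_
  simp only [Pi.div_apply, Pi.add_apply, Pi.pow_apply, Pi.mul_apply]
  field_simp
  grind [sin_sq_add_cos_sq]

theorem integral_one_div_sq_mul_cos_sq_add_sq_mul_sin_sq {a b : ℝ} (ha : 0 < a) (hb : 0 < b) :
    ∫ ν in (0 : ℝ)..(π / 2), 1 / (a ^ 2 * cos ν ^ 2 + b ^ 2 * sin ν ^ 2) = π / (2 * a * b) := by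
  have hint : IntervalIntegrable (fun ν => a * b / (a ^ 2 * cos ν ^ 2 + b ^ 2 * sin ν ^ 2))
      MeasureTheory.volume 0 (π / 2) :=
    (continuous_const.div (by fun_prop) fun ν =>
      (mul_cos_sq_add_mul_sin_sq_pos (pow_pos ha 2) (pow_pos hb 2) ν).ne').intervalIntegrable _ _
  have hftc := integral_eq_sub_of_hasDerivAt
    (fun ν _ => hasDerivAt_sub_arctan_sin_mul_cos_div ha hb ν) hint
  simp only [div_eq_mul_one_div (a * b), integral_const_mul, cos_pi_div_two, sin_pi_div_two,
    sin_zero, cos_zero, mul_zero, zero_mul, zero_div, arctan_zero, sub_zero] at hftc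
  rw [eq_div_iff (by positivity)]
  linarith

theorem integral_one_div_one_add_mul_cos_sq {a : ℝ} (ha : -1 < a) :
    ∫ ν in (0 : ℝ)..(π / 2), 1 / (1 + a * cos ν ^ 2) = π / (2 * √(1 + a)) := by
  have hc : 0 < √(1 + a) := sqrt_pos.2 (by linarith)
  have hden (ν : ℝ) : 1 + a * cos ν ^ 2 = √(1 + a) ^ 2 * cos ν ^ 2 + 1 ^ 2 * sin ν ^ 2 := by
    rw [sq_sqrt (by linarith), sin_sq]
    ring
  simp only [hden, integral_one_div_sq_mul_cos_sq_add_sq_mul_sin_sq hc one_pos, mul_one]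

theorem integral_cos_three_mul_mul_arctan_mul_cos (b : ℝ) :
    ∫ ν in (0 : ℝ)..(π / 2), cos (3 * ν) * arctan (b * cos ν)
      = b / 3 * ∫ ν in (0 : ℝ)..(π / 2), sin (3 * ν) * sin ν / (1 + b ^ 2 * cos ν ^ 2) := by
  have hu (ν : ℝ) : HasDerivAt (fun ν => arctan (b * cos ν))
      (-(b * sin ν / (1 + b ^ 2 * cos ν ^ 2))) ν := by
    convert ((hasDerivAt_cos ν).const_mul b).arctan using 1
    ring
  have hv (ν : ℝ) : HasDerivAt (fun ν => sin (3 * ν) / 3) (cos (3 * ν)) ν :=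
    (((hasDerivAt_id ν).const_mul 3).sin.div_const 3).congr_deriv (by simp)
  have hu' : Continuous fun ν => b * sin ν / (1 + b ^ 2 * cos ν ^ 2) :=
    by fun_prop (disch := intro ν; positivity)
  have hparts := integral_mul_deriv_eq_deriv_mul (a := 0) (b := π / 2)
    (fun ν _ => hu ν) (fun ν _ => hv ν) (hu'.neg.intervalIntegrable _ _)
    ((by fun_prop : Continuous fun ν => cos (3 * ν)).intervalIntegrable _ _)
  simp only [mul_comm (cos _), hparts, cos_pi_div_two, mul_zero, zero_mul, arctan_zero, sin_zero,
    zero_div, neg_zero, zero_sub, ← integral_neg, ← integral_const_mul]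
  congr 1 with ν
  ring

theorem sin_three_mul_mul_sin_div_one_add_sq_mul_cos_sq {b : ℝ} (hb : b ≠ 0) (ν : ℝ) :
    sin (3 * ν) * sin ν / (1 + b ^ 2 * cos ν ^ 2)
      = (5 * b ^ 2 + 4) / b ^ 4 - 4 / b ^ 2 * cos ν ^ 2
        - (b ^ 4 + 5 * b ^ 2 + 4) / b ^ 4 * (1 / (1 + b ^ 2 * cos ν ^ 2)) := by
  have hden : 1 + b ^ 2 * cos ν ^ 2 ≠ 0 := by positivity
  rw [sin_three_mul]
  field_simp
  grind [sin_sq_add_cos_sq]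

theorem integral_cos3_arctan (b : ℝ) (hb : b ≠ 0) :
    ∫ ν in (0 : ℝ)..(π / 2), Real.cos (3 * ν) * Real.arctan (b * Real.cos ν)
      = (π / (6 * b ^ 3)) *
          (3 * b ^ 2 + 4 - (b ^ 4 + 5 * b ^ 2 + 4) / Real.sqrt (b ^ 2 + 1)) := by
  have hrecip : Continuous fun ν => 1 / (1 + b ^ 2 * cos ν ^ 2) :=
    by fun_prop (disch := intro ν; positivity)
  rw [integral_cos_three_mul_mul_arctan_mul_cos,
    integral_congr fun ν _ => sin_three_mul_mul_sin_div_one_add_sq_mul_cos_sq hb ν,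
    integral_sub (Continuous.intervalIntegrable (by fun_prop) _ _)
      ((hrecip.const_mul _).intervalIntegrable _ _),
    integral_sub intervalIntegrable_const (Continuous.intervalIntegrable (by fun_prop) _ _),
    integral_const, integral_const_mul, integral_const_mul, integral_cos_sq,
    integral_one_div_one_add_mul_cos_sq (neg_one_lt_zero.trans_le (sq_nonneg b)), add_comm 1]
  simp only [cos_pi_div_two, sin_pi_div_two, cos_zero, sin_zero, smul_eq_mul]
  field_simp
  ring
end
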